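/- arXiv:1703.05797 — 2 statements merged into one kernel-verified Lean document; each statement's English description precedes it below -/
import Mathlib

section
/- Let n and w be integers with n ≥ 2 and 2 ≤ 2w ≤ n−1, set α = ⌊w/(n−2w)⌋ and s = w mod (n−2w), and let 𝒲 = λA_𝒲 − B_𝒲 be the n×n skew-symmetric pencil given by the direct sum of s copies of M_{α+1} followed by n−2w−s copies of M_α. Then the ℂ-linear subspace T := {(XᵀA_𝒲 + A_𝒲X, XᵀB_𝒲 + B_𝒲X) : X ∈ ℂ^{n×n}} of the space of pairs of n×n complex matrices (the tangent space at 𝒲 to the congruence orbit of 𝒲) has dimension n(n−1) − (n−2w−1)(n−w); equivalently, the codimension of the congruence orbit of 𝒲 in the n(n−1)-dimensional space of n×n skew-symmetric pencils equals (n−2w−1)(n−w). -/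
open Matrix

noncomputable section

/-- The `k × (k+1)` matrix `G_k` with `(G_k)_{i,i} = 1` and all other entries `0`. -/
def Gmat (k : ℕ) : Matrix (Fin k) (Fin (k+1)) ℂ := fun i j => if j.1 = i.1 then 1 else 0

/-- The `k × (k+1)` matrix `F_k` with `(F_k)_{i,i+1} = 1` and all other entries `0`. -/
def Fmat (k : ℕ) : Matrix (Fin k) (Fin (k+1)) ℂ := fun i j => if j.1 = i.1 + 1 then 1 else 0

/-- The `k × k` upper triangular Jordan block `J_k(μ)`. -/
def Jord (k : ℕ) (μ : ℂ) : Matrix (Fin k) (Fin k) ℂ :=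
  fun i j => if i = j then μ else if j.1 = i.1 + 1 then 1 else 0

/-- λ-coefficient of the canonical skew-symmetric singular block
`M_k = λ [[0, G_k],[−G_kᵀ, 0]] − [[0, F_k],[−F_kᵀ, 0]]`, written as a single
`(2k+1) × (2k+1)` matrix (rows/columns `0,…,k-1` correspond to the first block
row/column, rows/columns `k,…,2k` to the second). -/
def MA (k : ℕ) : Matrix (Fin (2*k+1)) (Fin (2*k+1)) ℂ := fun i j =>
  if i.1 < k ∧ j.1 = k + i.1 then 1
  else if j.1 < k ∧ i.1 = k + j.1 then -1 else 0

/-- Constant coefficient of `M_k` (so that `M_k = λ • MA k − MB k`). -/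
def MB (k : ℕ) : Matrix (Fin (2*k+1)) (Fin (2*k+1)) ℂ := fun i j =>
  if i.1 < k ∧ j.1 = k + i.1 + 1 then 1
  else if j.1 < k ∧ i.1 = k + j.1 + 1 then -1 else 0

/-- Sizes of the blocks in the generic skew-symmetric pencil of rank `2w`:
the first `s = w mod (n−2w)` blocks are `M_{α+1}`, the rest are `M_α`,
`α = ⌊w/(n−2w)⌋`. -/
def genIdx (n w : ℕ) (i : Fin (n - 2*w)) : ℕ :=
  if i.1 < w % (n - 2*w) then w / (n - 2*w) + 1 else w / (n - 2*w)

/-- λ-coefficient of the generic pencil `𝒲 = M_{α+1} ⊕ ⋯ ⊕ M_{α+1} ⊕ M_α ⊕ ⋯ ⊕ M_α`. -/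
def WA (n w : ℕ) :
    Matrix ((i : Fin (n - 2*w)) × Fin (2 * genIdx n w i + 1))
           ((i : Fin (n - 2*w)) × Fin (2 * genIdx n w i + 1)) ℂ :=
  Matrix.blockDiagonal' fun i => MA (genIdx n w i)

/-- Constant coefficient of the generic pencil `𝒲`. -/
def WB (n w : ℕ) :
    Matrix ((i : Fin (n - 2*w)) × Fin (2 * genIdx n w i + 1))
           ((i : Fin (n - 2*w)) × Fin (2 * genIdx n w i + 1)) ℂ :=
  Matrix.blockDiagonal' fun i => MB (genIdx n w i)

/-- Congruence orbit of the pencil `λA − B`: all pencils `λ SᵀAS − SᵀBS`, `S` invertible. -/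
def congOrbit {p : Type*} [Fintype p] [DecidableEq p] (A B : Matrix p p ℂ) :
    Set (Matrix p p ℂ × Matrix p p ℂ) :=
  {P | ∃ S : Matrix p p ℂ, IsUnit S ∧ P = (Sᵀ * A * S, Sᵀ * B * S)}

/-- Strict equivalence orbit of the pencil `λA − B`: all pencils `λ QAR − QBR`,
`Q, R` invertible. -/
def eqvOrbit {R C : Type*} [Fintype R] [Fintype C] [DecidableEq R] [DecidableEq C]
    (A B : Matrix R C ℂ) : Set (Matrix R C ℂ × Matrix R C ℂ) :=
  {P | ∃ (Q : Matrix R R ℂ) (Z : Matrix C C ℂ), IsUnit Q ∧ IsUnit Z ∧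
    P = (Q * A * Z, Q * B * Z)}

/-- The (normal) rank of the pencil `λA − B`, i.e. the rank of `λA − B` as a matrix
over the field of rational functions `ℂ(λ)`. -/
def pencilRank {p : Type*} [Fintype p] (A B : Matrix p p ℂ) : ℕ :=
  Matrix.rank (Matrix.of fun i j =>
    (RatFunc.X : RatFunc ℂ) * algebraMap ℂ (RatFunc ℂ) (A i j) -
      algebraMap ℂ (RatFunc ℂ) (B i j))

/-- An `m × m` matrix polynomial of grade `d` is a tuple `(A_0, …, A_d)`,
identified with `P(λ) = λᵈA_d + ⋯ + λA_1 + A_0`.  Its (normal) rank is its rank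
as a matrix over `ℂ(λ)`. -/
def polyRank {m d : ℕ} (P : Fin (d+1) → Matrix (Fin m) (Fin m) ℂ) : ℕ :=
  Matrix.rank (Matrix.of fun a b =>
    ∑ i : Fin (d+1), (RatFunc.X : RatFunc ℂ) ^ i.1 * algebraMap ℂ (RatFunc ℂ) (P i a b))

/-- λ-coefficient of the block-pencil linearization `L_P` of an `m × m` matrix polynomial
of odd grade `d`.  Block row/column indices are `0`-based (`j = i − 1` for the `1`-based
index `i` of the paper): the `(j,j)` block is `λA_{d−j} + A_{d−j−1}` for even `j` and `0`
for odd `j`; the `(j,j+1)` block is `−I` for even `j` and `−λI` for odd `j`; the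
`(j+1,j)` block is `I` for even `j` and `λI` for odd `j`. -/
def LA {m d : ℕ} (P : Fin (d+1) → Matrix (Fin m) (Fin m) ℂ) :
    Matrix (Fin d × Fin m) (Fin d × Fin m) ℂ := fun p q =>
  if p.1 = q.1 then (if p.1.1 % 2 = 0 then P ⟨d - p.1.1, by omega⟩ p.2 q.2 else 0)
  else if q.1.1 = p.1.1 + 1 then (if p.1.1 % 2 = 1 ∧ p.2 = q.2 then -1 else 0)
  else if p.1.1 = q.1.1 + 1 then (if q.1.1 % 2 = 1 ∧ p.2 = q.2 then 1 else 0)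
  else 0

/-- Constant coefficient of the linearization `L_P` (so that `L_P = λ • LA P − LB P`). -/
def LB {m d : ℕ} (P : Fin (d+1) → Matrix (Fin m) (Fin m) ℂ) :
    Matrix (Fin d × Fin m) (Fin d × Fin m) ℂ := fun p q =>
  if p.1 = q.1 then (if p.1.1 % 2 = 0 then -(P ⟨d - p.1.1 - 1, by omega⟩ p.2 q.2) else 0)
  else if q.1.1 = p.1.1 + 1 then (if p.1.1 % 2 = 0 ∧ p.2 = q.2 then 1 else 0)
  else if p.1.1 = q.1.1 + 1 then (if q.1.1 % 2 = 0 ∧ p.2 = q.2 then -1 else 0)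
  else 0

/-- The generalized Sylvester space: all pencils `L_Q` for `Q` an `m × m`
skew-symmetric matrix polynomial of grade `d`. -/
def GSYL (m d : ℕ) :
    Set (Matrix (Fin d × Fin m) (Fin d × Fin m) ℂ × Matrix (Fin d × Fin m) (Fin d × Fin m) ℂ) :=
  {L | ∃ Q : Fin (d+1) → Matrix (Fin m) (Fin m) ℂ,
    (∀ i, (Q i)ᵀ = -(Q i)) ∧ L = (LA Q, LB Q)}

/-- Square of the Frobenius norm of a complex matrix. -/
def frobSq {p q : Type*} [Fintype p] [Fintype q] (A : Matrix p q ℂ) : ℝ :=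
  ∑ i, ∑ j, ‖A i j‖ ^ 2

/-- The point of `ℂ^(2n²)` given by the entries of the pair of matrices `(C, D)`. -/
def pairPoint {n : ℕ} (C D : Matrix (Fin n) (Fin n) ℂ) :
    (Fin n × Fin n) ⊕ (Fin n × Fin n) → ℂ :=
  Sum.elim (fun x => C x.1 x.2) (fun x => D x.1 x.2)

/-- The linear map `X ↦ (XᵀA + AX, XᵀB + BX)` whose range is the tangent space at
`λA − B` to the congruence orbit of `λA − B`. -/
def congTangentMap {p : Type*} [Fintype p] [DecidableEq p] (A B : Matrix p p ℂ) :
    Matrix p p ℂ →ₗ[ℂ] Matrix p p ℂ × Matrix p p ℂ where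
  toFun X := (Xᵀ * A + A * X, Xᵀ * B + B * X)
  map_add' X Y := by
    simp only [Matrix.transpose_add, Matrix.add_mul, Matrix.mul_add, Prod.mk_add_mk,
      Prod.mk.injEq]
    constructor <;> abel
  map_smul' c X := by
    simp only [Matrix.transpose_smul, Matrix.smul_mul, Matrix.mul_smul, smul_add,
      RingHom.id_apply, Prod.smul_mk]

/-- The canonical skew-symmetric Smith form: the direct sum of the `2 × 2` blocks
`[[0, g_j],[−g_j, 0]]`, `j = 1, …, r`, followed by an `(m−2r) × (m−2r)` zero block. -/
def skewSmith (m r : ℕ) (g : Fin r → Polynomial ℂ) : Matrix (Fin m) (Fin m) (Polynomial ℂ) :=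
  fun i j =>
    if h : i.1 + 1 = j.1 ∧ i.1 % 2 = 0 ∧ j.1 < 2*r then g ⟨i.1 / 2, by omega⟩
    else if h' : j.1 + 1 = i.1 ∧ j.1 % 2 = 0 ∧ i.1 < 2*r then -(g ⟨j.1 / 2, by omega⟩)
    else 0

/-- Descriptor of a canonical block of the skew-symmetric Kronecker canonical form:
`H h μ` is the regular block `H_h(μ)` for a finite eigenvalue `μ`, `K k` is the regular
block `K_k` for the infinite eigenvalue, and `M k` is the singular block `M_k`. -/
inductive SkewBlock where
  | H : ℕ → ℂ → SkewBlock
  | K : ℕ → SkewBlock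
  | M : ℕ → SkewBlock

/-- Size of a canonical skew-symmetric block. -/
def blockSize : SkewBlock → ℕ
  | .H h _ => 2*h
  | .K k => 2*k
  | .M k => 2*k + 1

/-- Admissibility of a block: `H_h(μ)` requires `h ≥ 1` and `K_k` requires `k ≥ 1`. -/
def validBlock : SkewBlock → Prop
  | .H h _ => 1 ≤ h
  | .K k => 1 ≤ k
  | .M _ => True

/-- λ-coefficient of a canonical skew-symmetric block:
`H_h(μ) = λ[[0, I_h],[−I_h, 0]] − [[0, J_h(μ)],[−J_h(μ)ᵀ, 0]]`,
`K_k = λ[[0, J_k(0)],[−J_k(0)ᵀ, 0]] − [[0, I_k],[−I_k, 0]]`,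
`M_k = λ[[0, G_k],[−G_kᵀ, 0]] − [[0, F_k],[−F_kᵀ, 0]]`. -/
def blockA : (b : SkewBlock) → Matrix (Fin (blockSize b)) (Fin (blockSize b)) ℂ
  | .H h _ => fun i j =>
      if i.1 < h ∧ j.1 = h + i.1 then 1
      else if j.1 < h ∧ i.1 = h + j.1 then -1 else 0
  | .K k => fun i j =>
      if i.1 < k ∧ j.1 = k + i.1 + 1 then 1
      else if j.1 < k ∧ i.1 = k + j.1 + 1 then -1 else 0
  | .M k => MA k

/-- Constant coefficient of a canonical skew-symmetric block (the block pencil is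
`λ • blockA b − blockB b`). -/
def blockB : (b : SkewBlock) → Matrix (Fin (blockSize b)) (Fin (blockSize b)) ℂ
  | .H h μ => fun i j =>
      if i.1 < h ∧ j.1 = h + i.1 then μ
      else if i.1 < h ∧ j.1 = h + i.1 + 1 then 1
      else if j.1 < h ∧ i.1 = h + j.1 then -μ
      else if j.1 < h ∧ i.1 = h + j.1 + 1 then -1 else 0
  | .K k => fun i j =>
      if i.1 < k ∧ j.1 = k + i.1 then 1
      else if j.1 < k ∧ i.1 = k + j.1 then -1 else 0
  | .M k => MB k

/-- λ-coefficient of the Kronecker regular block `E_k(μ)`, where `μ : Option ℂ`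
(`some c` is a finite eigenvalue `c`, `none` is the eigenvalue `∞`):
`E_k(c) = λI_k − J_k(c)` and `E_k(∞) = λJ_k(0) − I_k`. -/
def EA (k : ℕ) : Option ℂ → Matrix (Fin k) (Fin k) ℂ
  | some _ => 1
  | none => Jord k 0

/-- Constant coefficient of `E_k(μ)` (the block pencil is `λ • EA k μ − EB k μ`). -/
def EB (k : ℕ) : Option ℂ → Matrix (Fin k) (Fin k) ℂ
  | some c => Jord k c
  | none => 1

end

/-!
Write `𝒲 = ⊕_g M_{k_g}` with `t = n - 2w` blocks, `∑ k_g = w`, and split the rows and columns of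
the `g`-th block into its first `k_g` ("top") and last `k_g + 1` ("bottom") indices. As `A_𝒲` and
`B_𝒲` are skew, `X` is in the kernel of the tangent map iff `A_𝒲 X` and `B_𝒲 X` are symmetric. On
each block `X_{gh}` these equations make the top × bottom part vanish, the bottom × bottom part an
upper triangular banded Toeplitz matrix with `(k_h + 1 - k_g)₊` free entries, the bottom × top
parts of `X_{gh}` and `X_{hg}` Hankel matrices sharing one sequence of length `k_g + k_h`, and they
determine the top × top part of `X_{gh}` by the bottom × bottom part of `X_{hg}`. When the `k_g`
differ by at most one, `∑_{g,h} (k_h + 1 - k_g)₊ = t²` (pair `(g, h)` with `(h, g)`), so the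
kernel has dimension `t² + (t + 1) w`, and rank–nullity in the `n²`-dimensional space of `X`
gives the claim.
-/

theorem Fin.sum_ite_val_eq {M : Type*} [AddCommMonoid M] (N m : ℕ) (c : M) :
    ∑ x : Fin N, (if x.1 = m then c else 0) = if m < N then c else 0 := by
  simp [Fin.sum_univ_eq_sum_range (fun x => if x = m then c else 0)]

namespace SkewPencil

open Module Finset

theorem finrank_range_congTangentMap_reindex {p q : Type*} [Fintype p] [DecidableEq p]
    [Fintype q] [DecidableEq q] (e : p ≃ q) (A B : Matrix p p ℂ) :
    finrank ℂ (LinearMap.range (congTangentMap (reindex e e A) (reindex e e B))) =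
      finrank ℂ (LinearMap.range (congTangentMap A B)) := by
  set E := reindexLinearEquiv ℂ ℂ e e
  have hconj : congTangentMap (reindex e e A) (reindex e e B) ∘ₗ E.toLinearMap =
      (E.prodCongr E).toLinearMap ∘ₗ congTangentMap A B := by
    ext1 X
    simp [E, congTangentMap]
    exact ⟨rfl, rfl⟩
  rw [← LinearMap.range_comp_of_range_eq_top _ (LinearEquiv.range E), hconj, LinearMap.range_comp,
    LinearEquiv.finrank_map_eq]

theorem transpose_mul_add_mul_eq_zero_iff {p R : Type*} [Fintype p] [CommRing R]
    {C : Matrix p p R} (hC : Cᵀ = -C) (X : Matrix p p R) :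
    Xᵀ * C + C * X = 0 ↔ (C * X)ᵀ = C * X := by
  rw [transpose_mul, hC, Matrix.mul_neg, add_eq_zero_iff_neg_eq, eq_comm]

theorem eq_ite_of_toeplitz {M : Type*} [Zero M] {a b : ℕ} {B : ℕ → ℕ → M}
    (hshift : ∀ x y, x < a → y < b → B (x + 1) (y + 1) = B x y)
    (hfirst : ∀ x < a, B (x + 1) 0 = 0) (hlast : ∀ x < a, B x b = 0)
    {x y : ℕ} (hx : x ≤ a) (hy : y ≤ b) :
    B x y = if x ≤ y ∧ y - x < b + 1 - a then B 0 (y - x) else 0 := by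
  have hdiag : ∀ x y, x ≤ a → y ≤ b → x ≤ y → B x y = B 0 (y - x) := by
    intro x
    induction x with
    | zero => simp
    | succ x ih =>
      intro y hx hy hxy
      obtain ⟨y, rfl⟩ : ∃ y', y = y' + 1 := ⟨y - 1, by omega⟩
      rw [hshift x y (by omega) (by omega), ih y (by omega) (by omega) (by omega)]
      congr 1
      omega
  have hbelow : ∀ y x, x ≤ a → y ≤ b → y < x → B x y = 0 := by
    intro y
    induction y with
    | zero =>
      intro x hx _ hxy
      obtain ⟨x, rfl⟩ : ∃ x', x = x' + 1 := ⟨x - 1, by omega⟩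
      exact hfirst x (by omega)
    | succ y ih =>
      intro x hx hy hxy
      obtain ⟨x, rfl⟩ : ∃ x', x = x' + 1 := ⟨x - 1, by omega⟩
      rw [hshift x y (by omega) (by omega), ih x (by omega) (by omega) (by omega)]
  split_ifs with hband
  · exact hdiag x y hx hy hband.1
  · by_cases hxy : x ≤ y
    · have hstart := hdiag (b - (y - x)) b (by omega) le_rfl (by omega)
      rw [show b - (b - (y - x)) = y - x by omega] at hstart
      rw [hdiag x y hx hy hxy, ← hstart, hlast _ (by omega)]
    · exact hbelow y x hx hy (by omega)

theorem sum_sum_tsub_eq_card_sq {ι : Type*} [Fintype ι] (k : ι → ℕ)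
    (hk : ∀ g h, k g ≤ k h + 1) :
    ∑ g, ∑ h, (k h + 1 - k g) = Fintype.card ι * Fintype.card ι := by
  have hpair : ∀ g h, (k h + 1 - k g) + (k g + 1 - k h) = 2 := fun g h => by
    have := hk g h
    have := hk h g
    omega
  have htwice : 2 * ∑ g, ∑ h, (k h + 1 - k g) = 2 * (Fintype.card ι * Fintype.card ι) := by
    calc 2 * ∑ g, ∑ h, (k h + 1 - k g)
        = ∑ g, ∑ h, (k h + 1 - k g) + ∑ g, ∑ h, (k g + 1 - k h) := by
          rw [two_mul, Finset.sum_comm (f := fun g h => k h + 1 - k g)]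
      _ = ∑ g : ι, ∑ h : ι, 2 := by simp only [← sum_add_distrib, hpair]
      _ = 2 * (Fintype.card ι * Fintype.card ι) := by simp; ring
  omega

theorem sum_sum_ite_le_add {ι : Type*} [Fintype ι] [LinearOrder ι] (k : ι → ℕ) :
    ∑ g, ∑ h, (if g ≤ h then k g + k h else 0) = (Fintype.card ι + 1) * ∑ g, k g := by
  have hpair : ∀ g h, (if g ≤ h then k g + k h else 0) + (if h ≤ g then k h + k g else 0) =
      k g + k h + if g = h then k g + k h else 0 := fun g h => by
    rcases lt_trichotomy g h with hgh | rfl | hgh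
    · simp [hgh.le, hgh.not_ge, hgh.ne]
    · simp
    · simp [hgh.le, hgh.not_ge, hgh.ne', add_comm]
  have htwice : 2 * ∑ g, ∑ h, (if g ≤ h then k g + k h else 0) =
      2 * ((Fintype.card ι + 1) * ∑ g, k g) := by
    calc 2 * ∑ g, ∑ h, (if g ≤ h then k g + k h else 0)
        = ∑ g, ∑ h, ((if g ≤ h then k g + k h else 0) + (if h ≤ g then k h + k g else 0)) := by
          rw [two_mul]
          nth_rw 2 [Finset.sum_comm]
          simp only [← sum_add_distrib]
      _ = 2 * ((Fintype.card ι + 1) * ∑ g, k g) := by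
          simp only [hpair, sum_add_distrib, sum_ite_eq, mem_univ, if_true, sum_const, card_univ,
            smul_eq_mul, ← mul_sum]
          ring
  omega

/-- `MA k = shiftSkew k 0` and `MB k = shiftSkew k 1`. -/
def shiftSkew (k d : ℕ) : Matrix (Fin (2*k+1)) (Fin (2*k+1)) ℂ := fun i j =>
  if i.1 < k ∧ j.1 = k + i.1 + d then 1
  else if j.1 < k ∧ i.1 = k + j.1 + d then -1 else 0

theorem shiftSkew_transpose (k d : ℕ) : (shiftSkew k d)ᵀ = -shiftSkew k d := by
  ext i j
  rw [transpose_apply, neg_apply]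
  unfold shiftSkew
  split_ifs <;> first | omega | norm_num

theorem sum_shiftSkew_mul {k d : ℕ} (hd : d ≤ 1) (i : Fin (2*k+1)) (f : ℕ → ℂ) :
    ∑ x, shiftSkew k d i x * f x =
      (if i.1 < k then f (k + i + d) else 0) -
        (if k + d ≤ i.1 ∧ i.1 < 2*k + d then f (i - (k + d)) else 0) := by
  have hterm : ∀ x : Fin (2*k+1), shiftSkew k d i x * f x =
      (if x.1 = k + i + d then (if i.1 < k then f (k + i + d) else 0) else 0) -
        (if x.1 = i - (k + d) then
          (if k + d ≤ i.1 ∧ i.1 < 2*k + d then f (i - (k + d)) else 0) else 0) := by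
    intro x
    unfold shiftSkew
    split_ifs <;> simp <;> first | omega | congr 1
  simp only [hterm, Finset.sum_sub_distrib, Fin.sum_ite_val_eq]
  congr 1 <;> split_ifs <;> first | rfl | omega

section Blocks

variable {t : ℕ} (k : Fin t → ℕ)

abbrev BlockIdx := (g : Fin t) × Fin (2 * k g + 1)

def blockShift (d : ℕ) : Matrix (BlockIdx k) (BlockIdx k) ℂ :=
  blockDiagonal' fun g => shiftSkew (k g) d

theorem blockShift_transpose (d : ℕ) : (blockShift k d)ᵀ = -blockShift k d := by
  rw [blockShift, blockDiagonal'_transpose, ← blockDiagonal'_neg]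
  simp only [shiftSkew_transpose]
  rfl

/-- The entries of a block matrix, addressed by natural-number positions within the blocks and
extended by `0` outside them. -/
def natEntry (X : Matrix (BlockIdx k) (BlockIdx k) ℂ) (g h : Fin t) (i j : ℕ) : ℂ :=
  if hi : i < 2 * k g + 1 then
    if hj : j < 2 * k h + 1 then X ⟨g, ⟨i, hi⟩⟩ ⟨h, ⟨j, hj⟩⟩ else 0
  else 0

theorem natEntry_val (X : Matrix (BlockIdx k) (BlockIdx k) ℂ) (g h : Fin t)
    (i : Fin (2 * k g + 1)) (j : Fin (2 * k h + 1)) :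
    natEntry k X g h i j = X ⟨g, i⟩ ⟨h, j⟩ := by
  rw [natEntry, dif_pos i.2, dif_pos j.2]

def shiftRow (F : Fin t → Fin t → ℕ → ℕ → ℂ) (d : ℕ) (g h : Fin t) (i j : ℕ) : ℂ :=
  (if i < k g then F g h (k g + i + d) j else 0) -
    (if k g + d ≤ i ∧ i < 2 * k g + d then F g h (i - (k g + d)) j else 0)

theorem blockShift_mul_apply {d : ℕ} (hd : d ≤ 1) (X : Matrix (BlockIdx k) (BlockIdx k) ℂ)
    (g h : Fin t) (i : Fin (2 * k g + 1)) (j : Fin (2 * k h + 1)) :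
    (blockShift k d * X) ⟨g, i⟩ ⟨h, j⟩ = shiftRow k (natEntry k X) d g h i j := by
  rw [mul_apply, Fintype.sum_sigma, Finset.sum_eq_single g]
  · simp only [blockShift, blockDiagonal'_apply_eq, ← natEntry_val k X]
    exact sum_shiftSkew_mul hd i (fun x => natEntry k X g h x j)
  · intro g' _ hg'
    simp [blockShift, blockDiagonal'_apply_ne _ _ _ (Ne.symm hg')]
  · simp

def ShiftRowSymm (F : Fin t → Fin t → ℕ → ℕ → ℂ) : Prop :=
  ∀ d ≤ 1, ∀ (g : Fin t) (i : Fin (2 * k g + 1)) (h : Fin t) (j : Fin (2 * k h + 1)),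
    shiftRow k F d h g j i = shiftRow k F d g h i j

theorem mem_ker_congTangentMap_blockShift_iff (X : Matrix (BlockIdx k) (BlockIdx k) ℂ) :
    X ∈ LinearMap.ker (congTangentMap (blockShift k 0) (blockShift k 1)) ↔
      ShiftRowSymm k (natEntry k X) := by
  have hker : X ∈ LinearMap.ker (congTangentMap (blockShift k 0) (blockShift k 1)) ↔
      ∀ d ≤ 1, Xᵀ * blockShift k d + blockShift k d * X = 0 := by
    rw [LinearMap.mem_ker]
    refine ⟨fun h d hd => ?_, fun h => Prod.ext (h 0 zero_le_one) (h 1 le_rfl)⟩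
    interval_cases d
    exacts [congrArg Prod.fst h, congrArg Prod.snd h]
  rw [hker, ShiftRowSymm]
  refine forall₂_congr fun d hd => ?_
  rw [transpose_mul_add_mul_eq_zero_iff (blockShift_transpose k d), ← Matrix.ext_iff]
  simp only [Sigma.forall, transpose_apply, blockShift_mul_apply k hd]

theorem shiftRow_of_lt (F : Fin t → Fin t → ℕ → ℕ → ℂ) (d : ℕ) {g : Fin t} (h : Fin t)
    {i : ℕ} (hi : i < k g) (j : ℕ) : shiftRow k F d g h i j = F g h (k g + i + d) j := by
  rw [shiftRow, if_pos hi, if_neg (by omega), sub_zero]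

theorem shiftRow_add (F : Fin t → Fin t → ℕ → ℕ → ℂ) (d : ℕ) (g h : Fin t) (x j : ℕ) :
    shiftRow k F d g h (k g + x) j =
      -(if d ≤ x ∧ x < k g + d then F g h (x - d) j else 0) := by
  rw [shiftRow, if_neg (by omega), zero_sub]
  congr 2
  · exact propext (by omega)
  · rw [show k g + x - (k g + d) = x - d by omega]

theorem shiftRow_congr {F G : Fin t → Fin t → ℕ → ℕ → ℂ} {d : ℕ} (hd : d ≤ 1)
    {g h : Fin t} {i j : ℕ} (hFG : ∀ a < 2 * k g + 1, F g h a j = G g h a j) :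
    shiftRow k F d g h i j = shiftRow k G d g h i j := by
  unfold shiftRow
  congr 1 <;> split_ifs <;> first | rfl | exact hFG _ (by omega)

/-- The values along the antidiagonals of the bottom × top part of the block `(g, h)`: the first
`k h` are read off its first row, the remaining `k g` off the last row of the bottom × top part of
the block `(h, g)`. -/
def hankelSeq (F : Fin t → Fin t → ℕ → ℕ → ℂ) (g h : Fin t) (m : ℕ) : ℂ :=
  if m < k h then F g h (k g) m else F h g (2 * k h) (m - k h)

namespace ShiftRowSymm

variable {k} {F : Fin t → Fin t → ℕ → ℕ → ℂ}

theorem apply (hF : ShiftRowSymm k F) {d : ℕ} (hd : d ≤ 1) {g h : Fin t} {i j : ℕ}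
    (hi : i < 2 * k g + 1) (hj : j < 2 * k h + 1) :
    shiftRow k F d g h i j = shiftRow k F d h g j i :=
  (hF d hd g ⟨i, hi⟩ h ⟨j, hj⟩).symm

theorem top_top (hF : ShiftRowSymm k F) {d : ℕ} (hd : d ≤ 1) {g h : Fin t} {i j : ℕ}
    (hi : i < k g) (hj : j < k h) :
    F g h (k g + i + d) j = F h g (k h + j + d) i := by
  simpa only [shiftRow_of_lt k F d _ hi, shiftRow_of_lt k F d _ hj] using
    hF.apply hd (g := g) (h := h) (i := i) (j := j) (by omega) (by omega)

theorem top_bot (hF : ShiftRowSymm k F) {d : ℕ} (hd : d ≤ 1) {g h : Fin t} {i y : ℕ}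
    (hi : i < k g) (hy : y ≤ k h) :
    F g h (k g + i + d) (k h + y) =
      -(if d ≤ y ∧ y < k h + d then F h g (y - d) i else 0) := by
  simpa only [shiftRow_of_lt k F d _ hi, shiftRow_add] using
    hF.apply hd (g := g) (h := h) (i := i) (j := k h + y) (by omega) (by omega)

theorem bot_bot (hF : ShiftRowSymm k F) {d : ℕ} (hd : d ≤ 1) {g h : Fin t} {x y : ℕ}
    (hx : x ≤ k g) (hy : y ≤ k h) :
    (if d ≤ x ∧ x < k g + d then F g h (x - d) (k h + y) else 0) =
      (if d ≤ y ∧ y < k h + d then F h g (y - d) (k g + x) else 0) := by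
  simpa only [shiftRow_add, neg_inj] using
    hF.apply hd (g := g) (h := h) (i := k g + x) (j := k h + y) (by omega) (by omega)

theorem top_bot_eq_zero (hF : ShiftRowSymm k F) {g h : Fin t} {x y : ℕ} (hx : x < k g)
    (hy : y ≤ k h) :
    F g h x (k h + y) = 0 := by
  induction y generalizing x with
  | zero =>
    simpa [show x + 1 - 1 = x by omega, hx] using
      hF.bot_bot le_rfl (g := g) (h := h) (x := x + 1) (y := 0) (by omega) (by omega)
  | succ y ih =>
    have hstep := hF.bot_bot le_rfl (g := g) (h := h) (x := x + 1) (y := y + 1) (by omega) hy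
    rw [if_pos (by omega), if_pos (by omega), Nat.add_sub_cancel, Nat.add_sub_cancel] at hstep
    rw [hstep]
    by_cases hx1 : x + 1 < k g
    · have h0 := hF.bot_bot zero_le_one (g := g) (h := h) (x := x + 1) (y := y) (by omega)
        (by omega)
      rw [if_pos (by omega), if_pos (by omega), Nat.sub_zero, Nat.sub_zero] at h0
      rw [← h0, ih hx1 (by omega)]
    · have h0 := hF.bot_bot zero_le_one (g := g) (h := h) (x := k g) (y := y) le_rfl (by omega)
      rw [if_neg (by omega), if_pos (by omega), Nat.sub_zero] at h0
      rw [show x + 1 = k g by omega, ← h0]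

theorem bot_bot_eq (hF : ShiftRowSymm k F) {g h : Fin t} {x y : ℕ} (hx : x ≤ k g)
    (hy : y ≤ k h) :
    F g h (k g + x) (k h + y) =
      if x ≤ y ∧ y - x < k h + 1 - k g then F g h (k g) (k h + (y - x)) else 0 := by
  refine eq_ite_of_toeplitz (B := fun x y => F g h (k g + x) (k h + y)) ?_ ?_ ?_ hx hy
  · intro x y hx hy
    have h1 := hF.top_bot le_rfl (g := g) (h := h) (i := x) (y := y + 1) hx (by omega)
    have h0 := hF.top_bot zero_le_one (g := g) (h := h) (i := x) (y := y) hx (by omega)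
    rw [if_pos (by omega), Nat.add_sub_cancel] at h1
    rw [if_pos (by omega), Nat.sub_zero, Nat.add_zero] at h0
    simp only [← add_assoc] at h1 ⊢
    rw [h1, h0]
  · intro x hx
    simpa [← add_assoc] using hF.top_bot le_rfl (g := g) (h := h) (i := x) (y := 0) hx (by omega)
  · intro x hx
    simpa using hF.top_bot zero_le_one (g := g) (h := h) (i := x) (y := k h) hx le_rfl

theorem top_top_eq (hF : ShiftRowSymm k F) {g h : Fin t} {i j : ℕ} (hi : i < k g)
    (hj : j < k h) :
    F g h i j = -F h g (k h + j) (k g + i) := by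
  have hrel : F h g (k h + j) (k g + i) = -F g h i j := by
    simpa [hi] using hF.top_bot zero_le_one (g := h) (h := g) (i := j) (y := i) hj (by omega)
  rw [hrel, neg_neg]

theorem bot_top_eq_hankelSeq (hF : ShiftRowSymm k F) {g h : Fin t} {x j : ℕ} (hx : x ≤ k g)
    (hj : j < k h) :
    F g h (k g + x) j = hankelSeq k F g h (x + j) := by
  induction x generalizing j with
  | zero => simp [hankelSeq, hj]
  | succ x ih =>
    rw [← add_assoc, hF.top_top le_rfl (by omega) hj]
    by_cases hj1 : j + 1 < k h
    · have hswap := hF.top_top zero_le_one (g := h) (h := g) (i := j + 1) (j := x) hj1 (by omega)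
      simp only [add_zero, ← add_assoc] at hswap
      rw [hswap, ih (by omega) hj1, add_right_comm, add_assoc]
    · rw [hankelSeq, if_neg (by omega), show k h + j + 1 = 2 * k h by omega,
        show x + 1 + j - k h = x by omega]

theorem hankelSeq_comm (hF : ShiftRowSymm k F) {g h : Fin t} {m : ℕ} (hm : m < k g + k h) :
    hankelSeq k F g h m = hankelSeq k F h g m := by
  by_cases hmh : m < k h
  · rcases Nat.eq_zero_or_pos (k g) with hg | hg
    · simp [hankelSeq, hmh, hg]
    · have hcross := hF.top_top zero_le_one (g := g) (h := h) (i := 0) (j := m) hg hmh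
      simp only [add_zero] at hcross
      rw [hankelSeq, if_pos hmh, hcross, hF.bot_top_eq_hankelSeq (by omega) hg, add_zero]
  · rw [hankelSeq, if_neg hmh, two_mul, hF.bot_top_eq_hankelSeq le_rfl (by omega),
      Nat.add_sub_cancel' (by omega)]

theorem congr (hF : ShiftRowSymm k F) {G : Fin t → Fin t → ℕ → ℕ → ℂ}
    (hFG : ∀ g h a b, a < 2 * k g + 1 → b < 2 * k h + 1 → F g h a b = G g h a b) :
    ShiftRowSymm k G := by
  intro d hd g i h j
  rw [← shiftRow_congr k hd fun a ha => hFG h g a i ha i.2,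
    ← shiftRow_congr k hd fun a ha => hFG g h a j ha j.2]
  exact hF d hd g i h j

end ShiftRowSymm

/-- Coordinates on the kernel: the first row of the Toeplitz bottom × bottom part of every block
`(g, h)` (of length `k h + 1 - k g`, truncated at `0`), and the Hankel sequence of the bottom × top
part of every block `(g, h)` with `g ≤ h`. -/
abbrev KerParams :=
  ((g h : Fin t) → Fin (k h + 1 - k g) → ℂ) ×
    ((g h : Fin t) → Fin (if g ≤ h then k g + k h else 0) → ℂ)

def toepParam (v : KerParams k) (g h : Fin t) (c : ℕ) : ℂ :=
  if hc : c < k h + 1 - k g then v.1 g h ⟨c, hc⟩ else 0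

def hankParam (v : KerParams k) (g h : Fin t) (m : ℕ) : ℂ :=
  if hgh : g ≤ h then
    if hm : m < k g + k h then v.2 g h ⟨m, by rwa [if_pos hgh]⟩ else 0
  else
    if hm : m < k h + k g then v.2 h g ⟨m, by rwa [if_pos (le_of_not_ge hgh)]⟩ else 0

theorem hankParam_comm (v : KerParams k) (g h : Fin t) (m : ℕ) :
    hankParam k v g h m = hankParam k v h g m := by
  rcases lt_trichotomy g h with hgh | rfl | hgh
  · simp [hankParam, hgh.le, not_le.2 hgh]
  · rfl
  · simp [hankParam, hgh.le, not_le.2 hgh]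

def paramEntry (v : KerParams k) (g h : Fin t) (i j : ℕ) : ℂ :=
  if i < k g then (if j < k h ∧ j ≤ i then -toepParam k v h g (i - j) else 0)
  else if j < k h then hankParam k v g h (i - k g + j)
  else if i - k g ≤ j - k h then toepParam k v g h (j - k h - (i - k g)) else 0

def kerOfParams : KerParams k →ₗ[ℂ] Matrix (BlockIdx k) (BlockIdx k) ℂ where
  toFun v := Matrix.of fun p q => paramEntry k v p.1 q.1 p.2 q.2
  map_add' u v := by
    ext p q
    simp only [Matrix.of_apply, Matrix.add_apply, paramEntry, toepParam, hankParam]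
    split_ifs <;> simp
    ring
  map_smul' c v := by
    ext p q
    simp only [Matrix.of_apply, Matrix.smul_apply, paramEntry, toepParam, hankParam]
    split_ifs <;> simp

theorem natEntry_add (X Y : Matrix (BlockIdx k) (BlockIdx k) ℂ) :
    natEntry k (X + Y) = natEntry k X + natEntry k Y := by
  ext g h i j
  simp only [natEntry, Pi.add_apply]
  split_ifs <;> simp

theorem natEntry_smul (c : ℂ) (X : Matrix (BlockIdx k) (BlockIdx k) ℂ) :
    natEntry k (c • X) = c • natEntry k X := by
  ext g h i j
  simp only [natEntry, Pi.smul_apply]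
  split_ifs <;> simp

def paramsOfKer : Matrix (BlockIdx k) (BlockIdx k) ℂ →ₗ[ℂ] KerParams k where
  toFun X := (fun g h c => natEntry k X g h (k g) (k h + c),
    fun g h m => hankelSeq k (natEntry k X) g h m)
  map_add' X Y := by
    ext g h m <;> simp only [natEntry_add, hankelSeq, Prod.fst_add, Prod.snd_add, Pi.add_apply,
      ite_add_ite]
  map_smul' c X := by
    ext g h m <;> simp only [natEntry_smul, hankelSeq, Prod.smul_fst, Prod.smul_snd, Pi.smul_apply,
      RingHom.id_apply, smul_ite]

theorem natEntry_kerOfParams (v : KerParams k) {g h : Fin t} {i j : ℕ} (hi : i < 2 * k g + 1)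
    (hj : j < 2 * k h + 1) : natEntry k (kerOfParams k v) g h i j = paramEntry k v g h i j := by
  rw [natEntry, dif_pos hi, dif_pos hj]
  rfl

theorem toepParam_of_le (v : KerParams k) {g h : Fin t} {c : ℕ} (hc : k h + 1 - k g ≤ c) :
    toepParam k v g h c = 0 :=
  dif_neg (by omega)

theorem shiftRow_paramEntry_top_bot (v : KerParams k) {d : ℕ} (hd : d ≤ 1) {g h : Fin t}
    {i : ℕ} (hi : i < k g) (y : ℕ) :
    shiftRow k (paramEntry k v) d g h i (k h + y) =
      shiftRow k (paramEntry k v) d h g (k h + y) i := by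
  rw [shiftRow_of_lt k _ d h hi, shiftRow_add]
  simp only [paramEntry, if_neg (show ¬ k g + i + d < k g by omega),
    if_neg (show ¬ k h + y < k h by omega), if_pos hi, show k g + i + d - k g = i + d by omega,
    Nat.add_sub_cancel_left]
  split_ifs <;> (try simp only [neg_neg, neg_zero]) <;>
    first | omega | (congr 1; omega) | exact toepParam_of_le k v (by omega)

theorem shiftRow_paramEntry_bot_bot (v : KerParams k) (d : ℕ) (g h : Fin t) (x y : ℕ) :
    shiftRow k (paramEntry k v) d g h (k g + x) (k h + y) = 0 := by
  rw [shiftRow_add]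
  split_ifs
  · rw [paramEntry, if_pos (by omega), if_neg (by omega), neg_zero]
  · rw [neg_zero]

theorem shiftRowSymm_paramEntry (v : KerParams k) : ShiftRowSymm k (paramEntry k v) := by
  intro d hd g i h j
  by_cases hi : (i : ℕ) < k g <;> by_cases hj : (j : ℕ) < k h
  · rw [shiftRow_of_lt k _ d g hj, shiftRow_of_lt k _ d h hi]
    simp only [paramEntry, if_neg (show ¬ k h + j + d < k h by omega),
      if_neg (show ¬ k g + i + d < k g by omega), if_pos hi, if_pos hj, hankParam_comm k v h g]
    congr 1
    omega
  · obtain ⟨y, hy⟩ : ∃ y, (j : ℕ) = k h + y := ⟨j - k h, by omega⟩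
    rw [hy, shiftRow_paramEntry_top_bot k v hd hi]
  · obtain ⟨x, hx⟩ : ∃ x, (i : ℕ) = k g + x := ⟨i - k g, by omega⟩
    rw [hx, shiftRow_paramEntry_top_bot k v hd hj]
  · obtain ⟨x, hx⟩ : ∃ x, (i : ℕ) = k g + x := ⟨i - k g, by omega⟩
    obtain ⟨y, hy⟩ : ∃ y, (j : ℕ) = k h + y := ⟨j - k h, by omega⟩
    rw [hx, hy, shiftRow_paramEntry_bot_bot, shiftRow_paramEntry_bot_bot]

theorem kerOfParams_mem_ker (v : KerParams k) :
    kerOfParams k v ∈ LinearMap.ker (congTangentMap (blockShift k 0) (blockShift k 1)) :=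
  (mem_ker_congTangentMap_blockShift_iff k _).2 <| (shiftRowSymm_paramEntry k v).congr
    fun _ _ _ _ ha hb => (natEntry_kerOfParams k v ha hb).symm

theorem paramsOfKer_kerOfParams (v : KerParams k) : paramsOfKer k (kerOfParams k v) = v := by
  ext g h c
  · show natEntry k (kerOfParams k v) g h (k g) (k h + c) = v.1 g h c
    have hc := c.2
    rw [natEntry_kerOfParams k v (by omega) (by omega), paramEntry, if_neg (lt_irrefl _),
      if_neg (by omega), if_pos (by omega), Nat.sub_self, Nat.add_sub_cancel_left, Nat.sub_zero,
      toepParam, dif_pos hc]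
  · show hankelSeq k (natEntry k (kerOfParams k v)) g h c = v.2 g h c
    obtain ⟨hgh, hc⟩ : g ≤ h ∧ (c : ℕ) < k g + k h := by
      have hc := c.2
      split_ifs at hc with hgh
      exacts [⟨hgh, hc⟩, absurd hc (Nat.not_lt_zero _)]
    have hparam : hankParam k v g h c = v.2 g h c := by rw [hankParam, dif_pos hgh, dif_pos hc]
    rw [← hparam, hankelSeq]
    by_cases hch : (c : ℕ) < k h
    · rw [if_pos hch, natEntry_kerOfParams k v (by omega) (by omega), paramEntry,
        if_neg (lt_irrefl _), if_pos hch, Nat.sub_self, zero_add]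
    · rw [if_neg hch, natEntry_kerOfParams k v (by omega) (by omega), paramEntry,
        if_neg (by omega), if_pos (by omega), hankParam_comm,
        show 2 * k h - k h + (c - k h) = c by omega]

theorem toepParam_paramsOfKer (X : Matrix (BlockIdx k) (BlockIdx k) ℂ) (g h : Fin t) (c : ℕ) :
    toepParam k (paramsOfKer k X) g h c =
      if c < k h + 1 - k g then natEntry k X g h (k g) (k h + c) else 0 := by
  rw [toepParam]
  split_ifs <;> rfl

variable {k} in
theorem ShiftRowSymm.hankParam_paramsOfKer {X : Matrix (BlockIdx k) (BlockIdx k) ℂ}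
    (hX : ShiftRowSymm k (natEntry k X)) {g h : Fin t} {m : ℕ} (hm : m < k g + k h) :
    hankParam k (paramsOfKer k X) g h m = hankelSeq k (natEntry k X) g h m := by
  rw [hankParam]
  split_ifs <;> first | rfl | omega | exact (hX.hankelSeq_comm hm).symm

theorem kerOfParams_paramsOfKer {X : Matrix (BlockIdx k) (BlockIdx k) ℂ}
    (hX : X ∈ LinearMap.ker (congTangentMap (blockShift k 0) (blockShift k 1))) :
    kerOfParams k (paramsOfKer k X) = X := by
  have hF := (mem_ker_congTangentMap_blockShift_iff k X).1 hX
  ext ⟨g, i⟩ ⟨h, j⟩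
  show paramEntry k (paramsOfKer k X) g h i j = X ⟨g, i⟩ ⟨h, j⟩
  rw [← natEntry_val k X]
  have hi' := i.2
  have hj' := j.2
  by_cases hi : (i : ℕ) < k g <;> by_cases hj : (j : ℕ) < k h
  · rw [paramEntry, if_pos hi, hF.top_top_eq hi hj, hF.bot_bot_eq (by omega) (by omega),
      toepParam_paramsOfKer]
    split_ifs <;> first | rfl | omega | exact neg_zero.symm
  · obtain ⟨y, hy⟩ : ∃ y, (j : ℕ) = k h + y := ⟨j - k h, by omega⟩
    rw [paramEntry, if_pos hi, if_neg (by omega), hy, hF.top_bot_eq_zero hi (by omega)]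
  · obtain ⟨x, hx⟩ : ∃ x, (i : ℕ) = k g + x := ⟨i - k g, by omega⟩
    rw [paramEntry, if_neg hi, if_pos hj, hx, hF.bot_top_eq_hankelSeq (by omega) hj,
      Nat.add_sub_cancel_left, hF.hankParam_paramsOfKer (by omega)]
  · obtain ⟨x, hx⟩ : ∃ x, (i : ℕ) = k g + x := ⟨i - k g, by omega⟩
    obtain ⟨y, hy⟩ : ∃ y, (j : ℕ) = k h + y := ⟨j - k h, by omega⟩
    rw [paramEntry, if_neg hi, if_neg hj, hx, hy, hF.bot_bot_eq (by omega) (by omega),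
      toepParam_paramsOfKer, Nat.add_sub_cancel_left, Nat.add_sub_cancel_left]
    split_ifs <;> first | rfl | omega

theorem finrank_ker_congTangentMap_blockShift (hk : ∀ g h, k g ≤ k h + 1) :
    finrank ℂ (LinearMap.ker (congTangentMap (blockShift k 0) (blockShift k 1))) =
      t * t + (t + 1) * ∑ g, k g := by
  have hker : LinearMap.ker (congTangentMap (blockShift k 0) (blockShift k 1)) =
      LinearMap.range (kerOfParams k) := by
    ext X
    exact ⟨fun hX => ⟨_, kerOfParams_paramsOfKer k hX⟩,
      by rintro ⟨v, rfl⟩; exact kerOfParams_mem_ker k v⟩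
  rw [hker, LinearMap.finrank_range_of_inj
    (Function.LeftInverse.injective (paramsOfKer_kerOfParams k))]
  simp only [finrank_prod, finrank_pi_fintype, finrank_self, sum_const, card_univ,
    Fintype.card_fin, smul_eq_mul, mul_one]
  rw [sum_sum_tsub_eq_card_sq k hk, sum_sum_ite_le_add, Fintype.card_fin]

end Blocks

theorem genIdx_le_add_one (n w : ℕ) (g h : Fin (n - 2 * w)) :
    genIdx n w g ≤ genIdx n w h + 1 := by
  unfold genIdx
  split_ifs <;> omega

theorem sum_genIdx {n w : ℕ} (ht : 0 < n - 2 * w) : ∑ g, genIdx n w g = w := by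
  set t := n - 2 * w
  have hfilter : (range t).filter (· < w % t) = range (w % t) := by
    ext i
    simp only [mem_filter, mem_range]
    have := Nat.mod_lt w ht
    omega
  calc ∑ g, genIdx n w g = ∑ i ∈ range t, (w / t + if i < w % t then 1 else 0) := by
        rw [← Fin.sum_univ_eq_sum_range]
        refine sum_congr rfl fun g _ => ?_
        unfold genIdx
        split_ifs <;> rfl
    _ = t * (w / t) + w % t := by
        rw [sum_add_distrib, sum_const, card_range, smul_eq_mul, sum_boole, hfilter, card_range,
          Nat.cast_id]
    _ = w := Nat.div_add_mod w t

end SkewPencil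

theorem codim_congOrbit_generic_skew_pencil_general
    (n w : ℕ) (hn : 2 ≤ n) (hwn : 2 * w ≤ n - 1)
    (e : ((i : Fin (n - 2*w)) × Fin (2 * genIdx n w i + 1)) ≃ Fin n) :
    Module.finrank ℂ
        (LinearMap.range (congTangentMap (Matrix.reindex e e (WA n w))
          (Matrix.reindex e e (WB n w)))) =
      n * (n - 1) - (n - 2*w - 1) * (n - w) := by
  open SkewPencil Module in
  have ht : 0 < n - 2 * w := by omega
  rw [finrank_range_congTangentMap_reindex, show WA n w = blockShift (genIdx n w) 0 from rfl,
    show WB n w = blockShift (genIdx n w) 1 from rfl]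
  have hrank := LinearMap.finrank_range_add_finrank_ker
    (congTangentMap (blockShift (genIdx n w) 0) (blockShift (genIdx n w) 1))
  rw [finrank_ker_congTangentMap_blockShift _ (genIdx_le_add_one n w), sum_genIdx ht,
    finrank_matrix, Fintype.card_congr e, Fintype.card_fin, finrank_self, mul_one] at hrank
  generalize finrank ℂ (LinearMap.range (congTangentMap (blockShift (genIdx n w) 0)
    (blockShift (genIdx n w) 1))) = r at hrank ⊢
  obtain ⟨u, rfl⟩ : ∃ u, n = u + 1 + 2 * w := ⟨n - 2 * w - 1, by omega⟩
  rw [show u + 1 + 2 * w - 2 * w = u + 1 by omega] at hrank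
  rw [show u + 1 + 2 * w - 1 = u + 2 * w by omega, show u + 1 + 2 * w - 2 * w - 1 = u by omega,
    show u + 1 + 2 * w - w = u + 1 + w by omega]
  apply Nat.eq_sub_of_add_eq
  linarith

/-- The tangent space at `𝒲` to the congruence orbit of the generic
skew-symmetric pencil `𝒲` of rank `2w` has dimension `n(n−1) − (n−2w−1)(n−w)`;
equivalently, the codimension of the congruence orbit of `𝒲` in the `n(n−1)`-dimensional
space of `n × n` skew-symmetric pencils equals `(n−2w−1)(n−w)`. -/
theorem codim_congOrbit_generic_skew_pencil
    (n w : ℕ) (hn : 2 ≤ n) (hw : 2 ≤ 2 * w) (hwn : 2 * w ≤ n - 1)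
    (e : ((i : Fin (n - 2*w)) × Fin (2 * genIdx n w i + 1)) ≃ Fin n) :
    Module.finrank ℂ
        (LinearMap.range (congTangentMap (Matrix.reindex e e (WA n w))
          (Matrix.reindex e e (WB n w)))) =
      n * (n - 1) - (n - 2*w - 1) * (n - w) :=
  codim_congOrbit_generic_skew_pencil_general n w hn hwn e
end

section
/- Let P(λ) be an m×m complex skew-symmetric matrix polynomial, i.e., a matrix with entries in ℂ[λ] satisfying P(λ)ᵀ = −P(λ). Then there exist an integer r with 2r ≤ m, a unimodular matrix polynomial F(λ) ∈ ℂ[λ]^{m×m} (one whose determinant is a nonzero constant), and monic polynomials g_1(λ), …, g_r(λ) with g_j dividing g_{j+1} for j = 1, …, r−1, such that F(λ)ᵀ P(λ) F(λ) equals the direct sum of the 2×2 blocks [[0, g_j(λ)], [−g_j(λ), 0]] for j = 1, …, r, followed by an (m−2r)×(m−2r) zero block. Moreover, r and the polynomials g_1, …, g_r are uniquely determined by P. -/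
open Matrix

/-
A skew-symmetric matrix over `ℂ[λ]` has zero diagonal, and congruence by a transvection performs
the same elementary operation on a row and on the matching column. Over a Euclidean domain, an
entry of minimal size among all matrices congruent to `P` therefore divides every entry:
otherwise one or two such operations produce a nonzero remainder of smaller size. Moving that
entry `p` to position `(0, 1)` and clearing its two rows and columns splits off the block
`[[0, p], [-p, 0]]` from a skew-symmetric matrix with entries in `(p)`; normalising `p` to be
monic and inducting on the size gives the form.

For uniqueness: if `p` divides all `k × k` minors of a matrix, it divides those of every matrix
congruent to it. For the canonical form the greatest such `p` is the product of the first `k`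
terms of `g₁, g₁, g₂, g₂, …`, which determines `r` and every `gⱼ`.
-/

open Polynomial

theorem Equiv.Perm.exists_apply_eq_and_apply_eq {α : Type*} [DecidableEq α] {a b c d : α}
    (hab : a ≠ b) (hcd : c ≠ d) : ∃ σ : Equiv.Perm α, σ a = c ∧ σ b = d := by
  have hc : c ≠ Equiv.swap a c b := by
    intro h
    exact hab (by simpa using congrArg (Equiv.swap a c) h)
  refine ⟨Equiv.swap (Equiv.swap a c b) d * Equiv.swap a c, ?_, ?_⟩
  · simp [Equiv.swap_apply_of_ne_of_ne hc hcd]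
  · simp

theorem Finset.prod_range_card_dvd_prod {M : Type*} [CommMonoid M] {h : ℕ → M}
    (hh : ∀ s t, s ≤ t → h s ∣ h t) (T : Finset ℕ) :
    ∏ t ∈ Finset.range T.card, h t ∣ ∏ t ∈ T, h t := by
  induction T using Finset.induction_on_max with
  | empty => simp
  | insert a s ha ih =>
    have has : a ∉ s := fun h => lt_irrefl a (ha a h)
    have hcard : s.card ≤ a := by
      simpa using Finset.card_le_card (fun x hx => Finset.mem_range.mpr (ha x hx))
    rw [Finset.card_insert_of_notMem has, Finset.prod_range_succ, Finset.prod_insert has,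
      mul_comm]
    exact mul_dvd_mul (hh _ _ hcard) ih

def IsDvdChain {M : Type*} [Monoid M] {r : ℕ} (g : Fin r → M) : Prop :=
  ∀ (j : ℕ) (hj : j + 1 < r), g ⟨j, by omega⟩ ∣ g ⟨j + 1, hj⟩

namespace IsDvdChain

variable {M : Type*} [Monoid M] {r : ℕ} {g : Fin r → M}

theorem cons (hg : IsDvdChain g) {g₀ : M} (h₀ : ∀ t, g₀ ∣ g t) :
    IsDvdChain (Fin.cons g₀ g : Fin (r + 1) → M) := by
  rintro (_ | j) hj
  · exact h₀ _
  · exact hg j (by omega)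

theorem dvd_of_le (hg : IsDvdChain g) {a b : Fin r} (hab : a ≤ b) : g a ∣ g b := by
  obtain ⟨a, ha⟩ := a
  obtain ⟨b, hb⟩ := b
  replace hab : a ≤ b := hab
  induction b, hab using Nat.le_induction with
  | base => rfl
  | succ b hab ih => exact (ih (by omega)).trans (hg b hb)

end IsDvdChain

namespace Matrix

section Skew

variable {n R : Type*} [AddGroup R] {P : Matrix n n R}

theorem apply_swap_of_transpose_eq_neg (hP : Pᵀ = -P) (a b : n) : P b a = -P a b := by
  simpa using congrFun (congrFun hP a) b

theorem apply_self_of_transpose_eq_neg [IsAddTorsionFree R] (hP : Pᵀ = -P) (a : n) :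
    P a a = 0 :=
  self_eq_neg.mp (apply_swap_of_transpose_eq_neg hP a a)

end Skew

section CommRing

variable {n o R : Type*} [Fintype n] [DecidableEq n] [Fintype o] [DecidableEq o] [CommRing R]

def UnimodularCongr (P Q : Matrix n n R) : Prop :=
  ∃ E : Matrix n n R, IsUnit E.det ∧ Q = Eᵀ * P * E

namespace UnimodularCongr

variable {P Q S : Matrix n n R}

theorem refl (P : Matrix n n R) : UnimodularCongr P P :=
  ⟨1, by simp, by simp⟩

theorem trans (h₁ : UnimodularCongr P Q) (h₂ : UnimodularCongr Q S) : UnimodularCongr P S := by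
  obtain ⟨E, hE, rfl⟩ := h₁
  obtain ⟨F, hF, rfl⟩ := h₂
  exact ⟨E * F, by simpa [det_mul] using hE.mul hF, by simp [transpose_mul, Matrix.mul_assoc]⟩

theorem symm (h : UnimodularCongr P Q) : UnimodularCongr Q P := by
  obtain ⟨E, hE, rfl⟩ := h
  refine ⟨E⁻¹, isUnit_nonsing_inv_det E hE, ?_⟩
  have hEE : E * E⁻¹ = 1 := mul_nonsing_inv E hE
  calc P = (E * E⁻¹)ᵀ * P * (E * E⁻¹) := by simp [hEE]
    _ = E⁻¹ᵀ * (Eᵀ * P * E) * E⁻¹ := by simp only [transpose_mul, Matrix.mul_assoc]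

theorem transpose_eq_neg (h : UnimodularCongr P Q) (hP : Pᵀ = -P) : Qᵀ = -Q := by
  obtain ⟨E, -, rfl⟩ := h
  simp [transpose_mul, hP, Matrix.mul_assoc]

theorem submatrix (h : UnimodularCongr P Q) (e : o ≃ n) :
    UnimodularCongr (P.submatrix e e) (Q.submatrix e e) := by
  obtain ⟨E, hE, rfl⟩ := h
  refine ⟨E.submatrix e e, by rwa [det_submatrix_equiv_self], ?_⟩
  rw [transpose_submatrix, submatrix_mul_equiv, submatrix_mul_equiv]

theorem submatrix_iff (e : o ≃ n) :
    UnimodularCongr (P.submatrix e e) (Q.submatrix e e) ↔ UnimodularCongr P Q :=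
  ⟨fun h => by simpa [submatrix_submatrix] using h.submatrix e.symm, fun h => h.submatrix e⟩

theorem dvd_apply {p : R} (h : UnimodularCongr P Q) (hP : ∀ a b, p ∣ P a b) (a b : n) :
    p ∣ Q a b := by
  obtain ⟨E, -, rfl⟩ := h
  simp only [mul_apply]
  exact Finset.dvd_sum fun c _ => (Finset.dvd_sum fun d _ => (hP d c).mul_left _).mul_right _

end UnimodularCongr

theorem unimodularCongr_submatrix_perm (P : Matrix n n R) (σ : Equiv.Perm n) :
    UnimodularCongr P (P.submatrix σ σ) := by
  refine ⟨(1 : Matrix n n R).submatrix σ.symm id, ?_, ?_⟩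
  · rw [det_permute, det_one, mul_one]
    exact (Equiv.Perm.sign σ.symm).isUnit.map (Int.castRingHom R)
  · rw [transpose_submatrix, transpose_one, Matrix.mul_assoc, mul_submatrix_one,
      one_submatrix_mul]
    simp [submatrix_submatrix]

theorem unimodularCongr_fromBlocks {A A' : Matrix n n R} {B B' : Matrix o o R}
    (hA : UnimodularCongr A A') (hB : UnimodularCongr B B') :
    UnimodularCongr (fromBlocks A 0 0 B) (fromBlocks A' 0 0 B') := by
  obtain ⟨E, hE, rfl⟩ := hA
  obtain ⟨F, hF, rfl⟩ := hB
  refine ⟨fromBlocks E 0 0 F, by simpa [det_fromBlocks_zero₂₁] using hE.mul hF, ?_⟩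
  simp [fromBlocks_transpose, fromBlocks_multiply]

theorem transvection_transpose_mul_mul_apply {P : Matrix n n R} {a b : n} (ha : P a a = 0)
    (c : R) (x y : n) :
    ((transvection a b c)ᵀ * P * transvection a b c) x y =
      P x y + (if x = b then c * P a y else 0) + (if y = b then c * P x a else 0) := by
  have ht : (transvection a b c)ᵀ = transvection b a c := by
    ext i j; simp [transvection, single, and_comm, one_apply, eq_comm]
  rw [ht]
  by_cases hy : y = b
  · subst hy
    rw [mul_transvection_apply_same]
    by_cases hx : x = y
    · subst hx; simp [ha]
    · simp [hx]
  · rw [mul_transvection_apply_of_ne a b x y hy]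
    by_cases hx : x = b
    · subst hx; simp [hy]
    · simp [hx, hy]

theorem unimodularCongr_transvection (P : Matrix n n R) {a b : n} (hab : a ≠ b) (c : R) :
    UnimodularCongr P ((transvection a b c)ᵀ * P * transvection a b c) :=
  ⟨_, by simp [det_transvection_of_ne a b hab], rfl⟩

theorem exists_unimodularCongr_fromBlocks [IsAddTorsionFree R]
    {Q : Matrix (Fin 2 ⊕ n) (Fin 2 ⊕ n) R} (hQ : Qᵀ = -Q)
    (hdvd : ∀ a b, Q (.inl 0) (.inl 1) ∣ Q a b) :
    ∃ P₂ : Matrix n n R, P₂ᵀ = -P₂ ∧ (∀ a b, Q (.inl 0) (.inl 1) ∣ P₂ a b) ∧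
      UnimodularCongr Q
        (fromBlocks !![0, Q (.inl 0) (.inl 1); -Q (.inl 0) (.inl 1), 0] 0 0 P₂) := by
  set p := Q (.inl 0) (.inl 1)
  set D := Q.toBlocks₂₂
  set J : Matrix (Fin 2) (Fin 2) R := !![0, 1; -1, 0]
  have hJJ : J * J = -1 := by
    ext a b; fin_cases a <;> fin_cases b <;> simp [J, mul_apply, Fin.sum_univ_two]
  have hJt : Jᵀ = -J := by ext a b; fin_cases a <;> fin_cases b <;> simp [J]
  have hpJ : p • J = !![0, p; -p, 0] := by ext a b; fin_cases a <;> fin_cases b <;> simp [J]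
  obtain ⟨B, hB⟩ : ∃ B : Matrix (Fin 2) n R, ∀ a b, Q (.inl a) (.inr b) = p * B a b :=
    ⟨fun a b => (hdvd _ _).choose, fun a b => (hdvd _ _).choose_spec⟩
  have hQ' : Q = fromBlocks (p • J) (p • B) (-(p • Bᵀ)) D := by
    rw [← fromBlocks_toBlocks Q]
    congr 1
    · ext a b
      fin_cases a <;> fin_cases b <;>
        simp [J, p, toBlocks₁₁, apply_self_of_transpose_eq_neg hQ,
          apply_swap_of_transpose_eq_neg hQ (.inl 0) (.inl 1)]
    · ext a b; simp [toBlocks₁₂, hB]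
    · ext a b; simp [toBlocks₂₁, hB, apply_swap_of_transpose_eq_neg hQ (.inl _) (.inr _)]
  -- `W = J * B` solves `(p • J) * W = -(p • B)`, so `E` clears both off-diagonal blocks.
  set E : Matrix (Fin 2 ⊕ n) (Fin 2 ⊕ n) R := fromBlocks 1 (J * B) 0 1
  have hE : Eᵀ * Q * E = fromBlocks (p • J) 0 0 (D - p • (Bᵀ * J * B)) := by
    rw [hQ']
    simp only [E, fromBlocks_transpose, fromBlocks_multiply]
    simp [Matrix.mul_assoc, hJJ, ← Matrix.mul_assoc J, transpose_mul, hJt]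
    abel
  refine ⟨D - p • (Bᵀ * J * B), ?_, fun a b => ?_, E, by simp [E], ?_⟩
  · have hD : Dᵀ = -D := by ext a b; exact apply_swap_of_transpose_eq_neg hQ (.inr a) (.inr b)
    simp [hD, transpose_mul, hJt, Matrix.mul_assoc]
    abel
  · exact dvd_sub (hdvd (.inr a) (.inr b)) (by simp)
  · rw [hE, hpJ]

theorem unimodularCongr_skewBlock_mul_unit (p : R) {u : R} (hu : IsUnit u) :
    UnimodularCongr !![0, p; -p, 0] !![0, p * u; -(p * u), 0] := by
  refine ⟨!![1, 0; 0, u], by simpa using hu, ?_⟩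
  ext i j
  fin_cases i <;> fin_cases j <;> simp [mul_apply, Fin.sum_univ_two, mul_comm]

end CommRing

section Minors

variable {n R : Type*} [CommRing R]

def DividesMinors (k : ℕ) (p : R) (M : Matrix n n R) : Prop :=
  ∀ ρ γ : Fin k → n, p ∣ (M.submatrix ρ γ).det

namespace DividesMinors

variable {k : ℕ} {p : R} {M : Matrix n n R}

theorem transpose (h : DividesMinors k p M) : DividesMinors k p Mᵀ := fun ρ γ => by
  simpa [← transpose_submatrix, det_transpose] using h γ ρ

variable [Fintype n]

-- Each row of `(A * M).submatrix ρ γ` is a combination of rows of `M.submatrix id γ`, so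
-- multilinearity of `det` in the rows expands the minor into minors of `M`.
theorem mul_left (h : DividesMinors k p M) (A : Matrix n n R) : DividesMinors k p (A * M) := by
  intro ρ γ
  have hrows : (A * M).submatrix ρ γ = fun i => ∑ z, A (ρ i) z • M.submatrix id γ z := by
    ext i j
    simp [mul_apply]
  change p ∣ (detRowAlternating : (Fin k → R) [⋀^Fin k]→ₗ[R] R).toMultilinearMap _
  rw [hrows, MultilinearMap.map_sum]
  refine Finset.dvd_sum fun z _ => ?_
  rw [MultilinearMap.map_smul_univ, smul_eq_mul]
  exact (h z γ).mul_left _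

theorem mul_right (h : DividesMinors k p M) (A : Matrix n n R) : DividesMinors k p (M * A) := by
  simpa using (h.transpose.mul_left Aᵀ).transpose

theorem transpose_mul_mul (h : DividesMinors k p M) (E : Matrix n n R) :
    DividesMinors k p (Eᵀ * M * E) :=
  (h.mul_left Eᵀ).mul_right E

end DividesMinors

end Minors

section EuclideanDomain

variable {n R : Type*} [Fintype n] [DecidableEq n] [EuclideanDomain R] [IsAddTorsionFree R]
  {P : Matrix n n R}

theorem exists_unimodularCongr_apply_eq_mod (hP : Pᵀ = -P) {p : R} {x z l : n}
    (hxz : Associated (P x z) p) (hxl : ¬ p ∣ P x l) :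
    ∃ Q, UnimodularCongr P Q ∧ Q x l = P x l % p := by
  obtain ⟨u, hu⟩ := hxz
  have hlx : x ≠ l := by
    rintro rfl
    exact hxl (by rw [apply_self_of_transpose_eq_neg hP]; exact dvd_zero _)
  have hzl : z ≠ l := by
    rintro rfl
    exact hxl (Dvd.intro _ (Units.mul_inv_eq_iff_eq_mul u |>.mpr hu.symm))
  refine ⟨_, unimodularCongr_transvection P hzl (-(u * (P x l / p))), ?_⟩
  rw [transvection_transpose_mul_mul_apply (apply_self_of_transpose_eq_neg hP z), if_neg hlx,
    if_pos rfl, EuclideanDomain.mod_eq_sub_mul_div, ← hu]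
  ring

theorem exists_unimodularCongr_not_dvd_apply_row (hP : Pᵀ = -P) {i j k l : n} (hij : i ≠ j)
    (hi : ∀ y, P i j ∣ P i y) (hj : ∀ y, P i j ∣ P j y) (hkl : ¬ P i j ∣ P k l) :
    ∃ Q, UnimodularCongr P Q ∧ Q i j = P i j ∧ ¬ P i j ∣ Q i l := by
  have hdiag := apply_self_of_transpose_eq_neg hP
  have hki : k ≠ i := by rintro rfl; exact hkl (hi l)
  have hkj : k ≠ j := by rintro rfl; exact hkl (hj l)
  have hli : l ≠ i := by
    rintro rfl; exact hkl (by rw [apply_swap_of_transpose_eq_neg hP l k]; exact (hi k).neg_right)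
  have hlk : l ≠ k := by rintro rfl; exact hkl (by rw [hdiag]; exact dvd_zero _)
  obtain ⟨q, hq⟩ := hj k
  -- First clear the entry `(k, j)` against the pivot, then add row and column `k` to `i`.
  set P₁ := (transvection i k q)ᵀ * P * transvection i k q
  have h₁ : UnimodularCongr P P₁ := unimodularCongr_transvection P hki.symm q
  have hP₁ := apply_self_of_transpose_eq_neg (h₁.transpose_eq_neg hP)
  have hP₁kj : P₁ k j = 0 := by
    simp only [P₁, transvection_transpose_mul_mul_apply (hdiag i), if_pos, if_neg hkj.symm]
    rw [apply_swap_of_transpose_eq_neg hP, hq]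
    ring
  refine ⟨(transvection k i 1)ᵀ * P₁ * transvection k i 1,
    h₁.trans (unimodularCongr_transvection P₁ hki 1), ?_, ?_⟩
  · simp [transvection_transpose_mul_mul_apply (hP₁ k), hP₁kj, P₁,
      transvection_transpose_mul_mul_apply (hdiag i), hki.symm, hkj.symm, hij.symm]
  · simp only [transvection_transpose_mul_mul_apply (hP₁ k), P₁,
      transvection_transpose_mul_mul_apply (hdiag i), if_pos, if_neg hki.symm, if_neg hlk,
      if_neg hli, hdiag, mul_zero, add_zero, one_mul]
    intro h
    refine hkl ((dvd_add_right (hi l)).mp ?_)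
    convert dvd_sub h ((hi l).mul_left q) using 1
    ring

theorem exists_unimodularCongr_apply_lt (hP : Pᵀ = -P) {i j : n} (hp : P i j ≠ 0)
    (hdvd : ¬ ∀ a b, P i j ∣ P a b) :
    ∃ Q a b, UnimodularCongr P Q ∧ Q a b ≠ 0 ∧ EuclideanDomain.r (Q a b) (P i j) := by
  have reduce : ∀ Q x z l, UnimodularCongr P Q → Associated (Q x z) (P i j) →
      ¬ P i j ∣ Q x l → ∃ Q a b, UnimodularCongr P Q ∧ Q a b ≠ 0 ∧
        EuclideanDomain.r (Q a b) (P i j) := by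
    intro Q x z l hPQ hxz hxl
    obtain ⟨Q', hQQ', hQ'⟩ :=
      exists_unimodularCongr_apply_eq_mod (hPQ.transpose_eq_neg hP) hxz hxl
    exact ⟨Q', x, l, hPQ.trans hQQ', by rwa [hQ', Ne, EuclideanDomain.mod_eq_zero],
      hQ' ▸ EuclideanDomain.mod_lt _ hp⟩
  have hij : i ≠ j := by rintro rfl; exact hp (apply_self_of_transpose_eq_neg hP i)
  by_cases hi : ∀ y, P i j ∣ P i y
  · by_cases hj : ∀ y, P i j ∣ P j y
    · push Not at hdvd
      obtain ⟨k, l, hkl⟩ := hdvd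
      obtain ⟨Q, hPQ, hQij, hQil⟩ := exists_unimodularCongr_not_dvd_apply_row hP hij hi hj hkl
      exact reduce Q i j l hPQ (hQij ▸ Associated.refl _) hQil
    · push Not at hj
      obtain ⟨l, hl⟩ := hj
      exact reduce P j i l (.refl P)
        (by rw [apply_swap_of_transpose_eq_neg hP]; exact (Associated.refl _).neg_left) hl
  · push Not at hi
    obtain ⟨l, hl⟩ := hi
    exact reduce P i j l (.refl P) (Associated.refl _) hl

theorem exists_unimodularCongr_dvd_apply (hP : Pᵀ = -P) (hP0 : P ≠ 0) :
    ∃ Q i j, UnimodularCongr P Q ∧ Q i j ≠ 0 ∧ ∀ a b, Q i j ∣ Q a b := by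
  obtain ⟨i, j, hij⟩ : ∃ i j, P i j ≠ 0 := by
    by_contra! h
    exact hP0 (ext h)
  obtain ⟨_, ⟨hx0, Q, i, j, hPQ, rfl⟩, hmin⟩ := EuclideanDomain.r_wellFounded.has_min
    {x | x ≠ 0 ∧ ∃ Q i j, UnimodularCongr P Q ∧ Q i j = x} ⟨_, hij, P, i, j, .refl P, rfl⟩
  refine ⟨Q, i, j, hPQ, hx0, by_contra fun hdvd => ?_⟩
  obtain ⟨Q', a, b, hQQ', hne, hlt⟩ :=
    exists_unimodularCongr_apply_lt (hPQ.transpose_eq_neg hP) hx0 hdvd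
  exact hmin _ ⟨hne, Q', a, b, hPQ.trans hQQ', rfl⟩ hlt

theorem exists_unimodularCongr_dvd_apply_of_ne (hP : Pᵀ = -P) (hP0 : P ≠ 0) {a b : n}
    (hab : a ≠ b) : ∃ Q, UnimodularCongr P Q ∧ Q a b ≠ 0 ∧ ∀ x y, Q a b ∣ Q x y := by
  obtain ⟨Q, i, j, hPQ, hQ0, hdvd⟩ := exists_unimodularCongr_dvd_apply hP hP0
  have hij : i ≠ j := by
    rintro rfl; exact hQ0 (apply_self_of_transpose_eq_neg (hPQ.transpose_eq_neg hP) i)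
  obtain ⟨σ, hσa, hσb⟩ := Equiv.Perm.exists_apply_eq_and_apply_eq hab hij
  exact ⟨Q.submatrix σ σ, hPQ.trans (unimodularCongr_submatrix_perm Q σ),
    by simpa [hσa, hσb] using hQ0, fun x y => by simpa [hσa, hσb] using hdvd (σ x) (σ y)⟩

end EuclideanDomain

end Matrix

theorem skewSmith_zero (m : ℕ) (g : Fin 0 → ℂ[X]) : skewSmith m 0 g = 0 := by
  ext i j
  simp [skewSmith]

theorem skewSmith_apply_two_mul {m r : ℕ} (g : Fin r → ℂ[X]) (hm : 2 * r ≤ m) (t : Fin r) :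
    skewSmith m r g ⟨2 * t, by omega⟩ ⟨2 * t + 1, by omega⟩ = g t := by
  simp [skewSmith]
  omega

theorem skewSmith_submatrix_finSumFinEquiv {k r : ℕ} (g₀ : ℂ[X]) (g : Fin r → ℂ[X]) :
    (skewSmith (2 + k) (r + 1) (Fin.cons g₀ g)).submatrix finSumFinEquiv finSumFinEquiv =
      fromBlocks !![0, g₀; -g₀, 0] 0 0 (skewSmith k r g) := by
  refine Matrix.ext fun a b => ?_
  rcases a with a | a <;> rcases b with b | b
  · fin_cases a <;> fin_cases b <;> simp [skewSmith] <;> omega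
  all_goals
    have := a.2
    have := b.2
    simp [skewSmith]
    split_ifs <;> first | rfl | omega | exact dif_neg ‹_›

theorem exists_unimodularCongr_skewSmith (m : ℕ) (P : Matrix (Fin m) (Fin m) ℂ[X])
    (hP : Pᵀ = -P) : ∃ (r : ℕ) (g : Fin r → ℂ[X]), 2 * r ≤ m ∧ (∀ j, (g j).Monic) ∧
      IsDvdChain g ∧ UnimodularCongr P (skewSmith m r g) := by
  induction m using Nat.strong_induction_on with
  | _ m ih =>
  by_cases hP0 : P = 0
  · refine ⟨0, Fin.elim0, by omega, fun j => j.elim0, fun j hj => by omega, ?_⟩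
    rw [hP0, skewSmith_zero]
    exact .refl 0
  obtain ⟨k, rfl⟩ : ∃ k, m = 2 + k := by
    obtain ⟨a, b, hab⟩ : ∃ a b, P a b ≠ 0 := by
      by_contra! h
      exact hP0 (ext h)
    have : a ≠ b := by rintro rfl; exact hab (apply_self_of_transpose_eq_neg hP a)
    exact ⟨m - 2, by have := Fin.val_ne_of_ne this; omega⟩
  set e : Fin 2 ⊕ Fin k ≃ Fin (2 + k) := finSumFinEquiv
  have hPe : (P.submatrix e e)ᵀ = -P.submatrix e e := by rw [transpose_submatrix, hP]; rfl
  obtain ⟨Q, hPQ, hp, hdvd⟩ := exists_unimodularCongr_dvd_apply_of_ne hPe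
    (fun h => hP0 (by simpa [submatrix_submatrix] using congrArg (submatrix · e.symm e.symm) h))
    (a := .inl 0) (b := .inl 1) (by simp)
  obtain ⟨P₂, hP₂, hP₂dvd, hQP₂⟩ :=
    exists_unimodularCongr_fromBlocks (hPQ.transpose_eq_neg hPe) hdvd
  obtain ⟨r, g, hr, hmon, hg, hP₂g⟩ := ih k (by omega) P₂ hP₂
  set p := Q (.inl 0) (.inl 1)
  have hu : IsUnit (C p.leadingCoeff⁻¹) := isUnit_C.mpr (by simpa using hp)
  have hg₀ : ∀ t, p * C p.leadingCoeff⁻¹ ∣ g t := fun t =>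
    (associated_mul_unit_left p _ hu).dvd.trans
      (skewSmith_apply_two_mul g hr t ▸ hP₂g.dvd_apply hP₂dvd _ _)
  refine ⟨r + 1, Fin.cons (p * C p.leadingCoeff⁻¹) g, by omega,
    Fin.cases (monic_mul_leadingCoeff_inv hp) hmon, hg.cons hg₀, ?_⟩
  rw [← UnimodularCongr.submatrix_iff e, skewSmith_submatrix_finSumFinEquiv]
  exact hPQ.trans (hQP₂.trans (unimodularCongr_fromBlocks
    (unimodularCongr_skewBlock_mul_unit p hu) hP₂g))

-- The diagonal `g 0, g 0, g 1, g 1, …, 0, 0, …` of the ordinary Smith form of `skewSmith`.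
noncomputable def skewSmithDiag (r : ℕ) (g : Fin r → ℂ[X]) (t : ℕ) : ℂ[X] :=
  if h : t < 2 * r then g ⟨t / 2, by omega⟩ else 0

-- The `k`-th determinantal divisor (gcd of all `k × k` minors) of `skewSmith`.
noncomputable def skewSmithDetDivisor (r : ℕ) (g : Fin r → ℂ[X]) (k : ℕ) : ℂ[X] :=
  ∏ t ∈ Finset.range k, skewSmithDiag r g t

section SkewSmithDetDivisor

variable {m r : ℕ} {g : Fin r → ℂ[X]}

theorem skewSmithDiag_dvd_skewSmith_apply (a b : Fin m) :
    skewSmithDiag r g a ∣ skewSmith m r g a b := by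
  unfold skewSmith skewSmithDiag
  split_ifs <;> first | exact dvd_zero _ | exact dvd_rfl | omega | skip
  exact dvd_neg.mpr (dvd_of_eq (congrArg g (Fin.ext (by simp only; omega))))

theorem IsDvdChain.skewSmithDiag_dvd (hg : IsDvdChain g) {s t : ℕ} (hst : s ≤ t) :
    skewSmithDiag r g s ∣ skewSmithDiag r g t := by
  unfold skewSmithDiag
  split_ifs
  · exact hg.dvd_of_le (Fin.mk_le_mk.mpr (by omega))
  · exact dvd_zero _
  · omega
  · exact dvd_zero _

theorem IsDvdChain.dividesMinors_skewSmith (hg : IsDvdChain g) (k : ℕ) :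
    DividesMinors k (skewSmithDetDivisor r g k) (skewSmith m r g) := by
  intro ρ γ
  by_cases hρ : Function.Injective ρ
  · rw [det_apply]
    refine Finset.dvd_sum fun σ _ => ?_
    have hinj : Function.Injective fun i => (ρ i : ℕ) := Fin.val_injective.comp hρ
    have hterm : skewSmithDetDivisor r g k ∣ ∏ i, skewSmith m r g (ρ (σ i)) (γ i) :=
      calc skewSmithDetDivisor r g k
          ∣ ∏ t ∈ Finset.univ.image fun i => (ρ i : ℕ), skewSmithDiag r g t := by
            have := Finset.prod_range_card_dvd_prod (fun s t => hg.skewSmithDiag_dvd)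
              (Finset.univ.image fun i => (ρ i : ℕ))
            rwa [Finset.card_image_of_injective _ hinj, Finset.card_univ,
              Fintype.card_fin] at this
        _ = ∏ i, skewSmithDiag r g (ρ (σ i)) := by
            rw [Finset.prod_image fun i _ j _ h => hinj h,
              Equiv.prod_comp σ fun i => skewSmithDiag r g (ρ i)]
        _ ∣ ∏ i, skewSmith m r g (ρ (σ i)) (γ i) :=
            Finset.prod_dvd_prod_of_dvd _ _ fun i _ => skewSmithDiag_dvd_skewSmith_apply _ _
    rw [Units.smul_def, zsmul_eq_mul]
    exact hterm.mul_left _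
  · obtain ⟨i, j, hij, hne⟩ := Function.not_injective_iff.mp hρ
    rw [det_zero_of_row_eq hne (by ext; simp [hij])]
    exact dvd_zero _

-- `i + 1 - 2 * (i % 2)` is the partner of `i` in its pair `{2s, 2s + 1}`.
theorem skewSmith_submatrix_partner {k : ℕ} (hk : k ≤ 2 * r) (hm : 2 * r ≤ m) :
    (skewSmith m r g).submatrix (fun i : Fin k => ⟨i, by omega⟩)
        (fun i : Fin k => ⟨i + 1 - 2 * (i % 2), by omega⟩) =
      diagonal fun i : Fin k => (-1) ^ (i : ℕ) * skewSmithDiag r g i := by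
  refine Matrix.ext fun ⟨i, hi⟩ ⟨j, hj⟩ => ?_
  simp only [submatrix_apply, skewSmith, diagonal_apply, Fin.mk.injEq, skewSmithDiag]
  split_ifs <;> first
    | omega
    | rfl
    | rw [Even.neg_one_pow (Nat.even_iff.mpr (by omega)), one_mul]
    | rw [Odd.neg_one_pow (Nat.odd_iff.mpr (by omega)), neg_one_mul]; congr 3; omega

theorem dvd_skewSmithDetDivisor {k : ℕ} {p : ℂ[X]} (hk : k ≤ 2 * r) (hm : 2 * r ≤ m)
    (h : DividesMinors k p (skewSmith m r g)) : p ∣ skewSmithDetDivisor r g k := by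
  have := h (fun i => ⟨i, by omega⟩) (fun i => ⟨i + 1 - 2 * (i % 2), by omega⟩)
  rw [skewSmith_submatrix_partner hk hm, det_diagonal, Finset.prod_mul_distrib,
    IsUnit.dvd_mul_left (by rw [Finset.prod_pow_eq_pow_sum]; exact isUnit_one.neg.pow _)] at this
  simpa [skewSmithDetDivisor, Fin.prod_univ_eq_prod_range] using this

theorem skewSmithDetDivisor_monic (hmon : ∀ j, (g j).Monic) {k : ℕ} (hk : k ≤ 2 * r) :
    (skewSmithDetDivisor r g k).Monic :=
  monic_prod_of_monic _ _ fun t ht => by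
    rw [skewSmithDiag, dif_pos (by simp at ht; omega)]
    exact hmon _

theorem skewSmithDetDivisor_eq_zero {k : ℕ} (hk : 2 * r < k) : skewSmithDetDivisor r g k = 0 :=
  Finset.prod_eq_zero (Finset.mem_range.mpr hk) (by simp [skewSmithDiag])

theorem skewSmithDetDivisor_two_mul_add_two {j : ℕ} (hj : j < r) :
    skewSmithDetDivisor r g (2 * j + 2) = skewSmithDetDivisor r g (2 * j + 1) * g ⟨j, hj⟩ := by
  rw [skewSmithDetDivisor, Finset.prod_range_succ, skewSmithDiag, dif_pos (by omega)]
  congr 3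
  omega

end SkewSmithDetDivisor

theorem skewSmithDetDivisor_dvd_of_unimodularCongr {m r r' : ℕ} {g : Fin r → ℂ[X]}
    {g' : Fin r' → ℂ[X]} (hg : IsDvdChain g) (hr' : 2 * r' ≤ m) {k : ℕ} (hk : k ≤ 2 * r')
    (h : UnimodularCongr (skewSmith m r g) (skewSmith m r' g')) :
    skewSmithDetDivisor r g k ∣ skewSmithDetDivisor r' g' k := by
  obtain ⟨E, -, hE⟩ := h
  exact dvd_skewSmithDetDivisor hk hr' (hE ▸ (hg.dividesMinors_skewSmith k).transpose_mul_mul E)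

theorem eq_of_unimodularCongr_skewSmith {m r r' : ℕ} {g : Fin r → ℂ[X]} {g' : Fin r' → ℂ[X]}
    (hr : 2 * r ≤ m) (hr' : 2 * r' ≤ m) (hmon : ∀ j, (g j).Monic) (hmon' : ∀ j, (g' j).Monic)
    (hg : IsDvdChain g) (hg' : IsDvdChain g')
    (h : UnimodularCongr (skewSmith m r g) (skewSmith m r' g')) :
    r' = r ∧ ∀ (j : ℕ) (hj : j < r) (hj' : j < r'), g' ⟨j, hj'⟩ = g ⟨j, hj⟩ := by
  have hdvd {k} (hk : k ≤ 2 * r') := skewSmithDetDivisor_dvd_of_unimodularCongr hg hr' hk h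
  have hdvd' {k} (hk : k ≤ 2 * r) := skewSmithDetDivisor_dvd_of_unimodularCongr hg' hr hk h.symm
  obtain rfl : r = r' := by
    by_contra hne
    rcases Nat.lt_or_gt_of_ne hne with hlt | hlt
    · refine (skewSmithDetDivisor_monic hmon' (k := 2 * r + 1) (by omega)).ne_zero ?_
      simpa [skewSmithDetDivisor_eq_zero (g := g) (by omega : 2 * r < 2 * r + 1)]
        using hdvd (k := 2 * r + 1) (by omega)
    · refine (skewSmithDetDivisor_monic hmon (k := 2 * r' + 1) (by omega)).ne_zero ?_
      simpa [skewSmithDetDivisor_eq_zero (g := g') (by omega : 2 * r' < 2 * r' + 1)]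
        using hdvd' (k := 2 * r' + 1) (by omega)
  have heq {k} (hk : k ≤ 2 * r) : skewSmithDetDivisor r g' k = skewSmithDetDivisor r g k :=
    eq_of_monic_of_associated (skewSmithDetDivisor_monic hmon' hk)
      (skewSmithDetDivisor_monic hmon hk) (associated_of_dvd_dvd (hdvd' hk) (hdvd hk))
  refine ⟨rfl, fun j hj _ => mul_left_cancel₀
    (skewSmithDetDivisor_monic hmon (k := 2 * j + 1) (by omega)).ne_zero ?_⟩
  rw [← skewSmithDetDivisor_two_mul_add_two, ← heq (by omega), ← heq (by omega),
    skewSmithDetDivisor_two_mul_add_two]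

/-- (Skew-symmetric Smith form.) Every skew-symmetric matrix polynomial
`P(λ)` is unimodularly congruent to a direct sum of `2 × 2` blocks
`[[0, g_j],[−g_j, 0]]` with `g_j` monic and `g_j ∣ g_{j+1}`, followed by a zero block;
`r` and `g_1, …, g_r` are uniquely determined by `P`. -/
theorem skew_symmetric_smith_form
    (m : ℕ) (P : Matrix (Fin m) (Fin m) (Polynomial ℂ)) (hP : Pᵀ = -P) :
    ∃ (r : ℕ) (_ : 2 * r ≤ m) (F : Matrix (Fin m) (Fin m) (Polynomial ℂ))
      (g : Fin r → Polynomial ℂ),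
      IsUnit F.det ∧
      (∀ j, (g j).Monic) ∧
      (∀ (j : ℕ) (hj : j + 1 < r), g ⟨j, by omega⟩ ∣ g ⟨j + 1, hj⟩) ∧
      Fᵀ * P * F = skewSmith m r g ∧
      (∀ (r' : ℕ) (F' : Matrix (Fin m) (Fin m) (Polynomial ℂ))
        (g' : Fin r' → Polynomial ℂ),
        2 * r' ≤ m → IsUnit F'.det → (∀ j, (g' j).Monic) →
        (∀ (j : ℕ) (hj : j + 1 < r'), g' ⟨j, by omega⟩ ∣ g' ⟨j + 1, hj⟩) →
        F'ᵀ * P * F' = skewSmith m r' g' →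
        r' = r ∧ ∀ (j : ℕ) (hj : j < r) (hj' : j < r'), g' ⟨j, hj'⟩ = g ⟨j, hj⟩) := by
  obtain ⟨r, g, hr, hmon, hg, F, hF, hPF⟩ := exists_unimodularCongr_skewSmith m P hP
  refine ⟨r, hr, F, g, hF, hmon, hg, hPF.symm, fun r' F' g' hr' hF' hmon' hg' hPF' => ?_⟩
  have hPg : UnimodularCongr P (skewSmith m r g) := ⟨F, hF, hPF⟩
  exact eq_of_unimodularCongr_skewSmith hr hr' hmon hmon' hg hg'
    (hPg.symm.trans ⟨F', hF', hPF'.symm⟩)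
end
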